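/- Let E be an isotropic subspace of V × V*, and set Σ = pr_{V*} E, Σ′ = pr_{V*} E^⊥, S = ann_V Σ, S′ = ann_V Σ′. Then there exists a skew linear map Π : V* → V such that E = {(Πα + Z, α) : α ∈ Σ, Z ∈ S′} and E^⊥ = {(Πβ + W, β) : β ∈ Σ′, W ∈ S}. -/

import Mathlib

/-!
Choose a linear section `σ : Σ → V` of `pr_{V*}` with `(σ α, α) ∈ E`. Isotropy of `E` says
exactly that `β (σ α) = -α (σ β)` on `Σ`, and such a map extends to a skew `Π : V* → V`.
Since `E = (E^⊥)^⊥` and `(Z, 0) ⊥ F` iff `Z` annihilates `pr_{V*} F`, the vertical part of `E`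
is `S′`, so `E` is the graph of `Π` over `Σ` translated by `S′`. For `E^⊥`, pairing
`(Πα + Z, α)` with `(Πβ + W, β)` gives `α W + β Z + (α (Π β) + β (Π α))`, and every term
vanishes.
-/

open Module LinearMap

/-- The pairing metric `g((X,α),(Y,β)) = (1/2)(α(Y) + β(X))` on `V × V*`. -/
noncomputable def bigG (V : Type*) [AddCommGroup V] [Module ℝ V] :
    LinearMap.BilinForm ℝ (V × Module.Dual ℝ V) :=
  LinearMap.mk₂ ℝ (fun p q => (1 / 2 : ℝ) * (p.2 q.1 + q.2 p.1))
    (fun p p' q => by simp; ring)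
    (fun c p q => by simp; ring)
    (fun p q q' => by simp; ring)
    (fun c p q => by simp; ring)

/-- The `g`-orthogonal complement of a subspace of `V × V*`. -/
noncomputable def gOrth {V : Type*} [AddCommGroup V] [Module ℝ V]
    (E : Submodule ℝ (V × Module.Dual ℝ V)) : Submodule ℝ (V × Module.Dual ℝ V) :=
  LinearMap.BilinForm.orthogonal (bigG V) E

section Pairing

variable {V : Type*} [AddCommGroup V] [Module ℝ V]

@[simp]
theorem bigG_apply (p q : V × Dual ℝ V) : bigG V p q = 1 / 2 * (p.2 q.1 + q.2 p.1) := rfl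

theorem bigG_isRefl : (bigG V).IsRefl := by
  intro p q h
  simp only [bigG_apply] at h ⊢
  linarith

theorem bigG_nondegenerate : (bigG V).Nondegenerate := by
  refine (bigG_isRefl (V := V)).nondegenerate_iff_separatingLeft.mpr fun p hp => ?_
  have h1 : p.1 = 0 := (forall_dual_apply_eq_zero_iff ℝ p.1).mp fun φ => by
    simpa using hp (0, φ)
  have h2 : p.2 = 0 := LinearMap.ext fun Y => by simpa using hp (Y, 0)
  exact Prod.ext h1 h2

theorem gOrth_gOrth [FiniteDimensional ℝ V] (E : Submodule ℝ (V × Dual ℝ V)) :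
    gOrth (gOrth E) = E :=
  LinearMap.BilinForm.orthogonal_orthogonal bigG_nondegenerate bigG_isRefl E

theorem mem_gOrth_iff {F : Submodule ℝ (V × Dual ℝ V)} {q : V × Dual ℝ V} :
    q ∈ gOrth F ↔ ∀ p ∈ F, p.2 q.1 + q.2 p.1 = 0 := by
  simp [gOrth, LinearMap.BilinForm.mem_orthogonal_iff]

theorem mk_zero_mem_gOrth_iff {F : Submodule ℝ (V × Dual ℝ V)} {Z : V} :
    (Z, 0) ∈ gOrth F ↔ Z ∈ (F.map (LinearMap.snd ℝ V (Dual ℝ V))).dualCoannihilator := by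
  simp only [mem_gOrth_iff, Submodule.mem_dualCoannihilator]
  simpa using forall_comm

end Pairing

section VectorSpace

variable {K V : Type*} [Field K] [AddCommGroup V] [Module K V]

theorem Submodule.exists_linearMap_mk_mem {N : Type*} [AddCommGroup N]
    [Module K N] (E : Submodule K (V × N)) :
    ∃ σ : E.map (LinearMap.snd K V N) →ₗ[K] V, ∀ a, (σ a, (a : N)) ∈ E := by
  let f : E →ₗ[K] E.map (LinearMap.snd K V N) :=
    ((LinearMap.snd K V N).comp E.subtype).codRestrict _
      fun p => Submodule.mem_map_of_mem p.2
  have hf : LinearMap.range f = ⊤ := by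
    rw [LinearMap.range_eq_top]
    rintro ⟨α, p, hp, rfl⟩
    exact ⟨⟨p, hp⟩, rfl⟩
  obtain ⟨s, hs⟩ := LinearMap.exists_rightInverse_of_surjective f hf
  let σ := (LinearMap.fst K V N).comp (E.subtype.comp s)
  refine ⟨σ, fun a => ?_⟩
  have hsnd : (s a : V × N).2 = a := congrArg Subtype.val (LinearMap.congr_fun hs a)
  have hsa : (s a : V × N) = (σ a, (a : N)) := Prod.ext rfl hsnd
  exact hsa ▸ (s a).2

theorem exists_skew_extension [FiniteDimensional K V] {Φ : Submodule K (Dual K V)}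
    (σ : Φ →ₗ[K] V) (hσ : ∀ a b : Φ, (b : Dual K V) (σ a) = -(a : Dual K V) (σ b)) :
    ∃ Pi : Dual K V →ₗ[K] V,
      (∀ α β : Dual K V, β (Pi α) = -α (Pi β)) ∧ ∀ a : Φ, Pi a = σ a := by
  obtain ⟨P, hP⟩ := LinearMap.exists_leftInverse_of_injective (K := K) (V := Φ) (V' := Dual K V)
    Φ.subtype Φ.ker_subtype
  have hPa (a : Φ) : P a = a := LinearMap.congr_fun hP a
  let τ := σ ∘ₗ P
  let Q := LinearMap.id - Φ.subtype ∘ₗ P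
  -- `β (Π α) = β (τ α) - (α - P α) (τ β)`: skew, and equal to `β (σ α)` when `α ∈ Φ`.
  let Pi := τ - (evalEquiv K V).symm.toLinearMap ∘ₗ τ.dualMap ∘ₗ Q
  have hPi (α β : Dual K V) : β (Pi α) = β (τ α) - (α - P α) (τ β) := by
    simp [Pi, Q, apply_evalEquiv_symm_apply]
  refine ⟨Pi, fun α β => ?_, fun a => ?_⟩
  · rw [hPi, hPi]
    have := hσ (P α) (P β)
    simp only [τ, LinearMap.comp_apply, LinearMap.sub_apply] at this ⊢
    linear_combination this
  · rw [← sub_eq_zero, ← forall_dual_apply_eq_zero_iff K]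
    intro β
    rw [map_sub, hPi, hPa, sub_self, LinearMap.zero_apply, sub_zero]
    simp [τ, hPa]

end VectorSpace

theorem setOf_exists_mk_add_eq {M N : Type*} [AddCommGroup M] (f : N → M) (A : Set N)
    (S : Set M) :
    {p : M × N | ∃ α ∈ A, ∃ Z ∈ S, p = (f α + Z, α)} = {p | p.2 ∈ A ∧ p.1 - f p.2 ∈ S} := by
  ext ⟨x, α⟩
  constructor
  · rintro ⟨α, hα, Z, hZ, hp⟩
    simp_all
  · rintro ⟨hα, hZ⟩
    exact ⟨α, hα, x - f α, hZ, by simp⟩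

section Graph

variable {V : Type*} [AddCommGroup V] [Module ℝ V] [FiniteDimensional ℝ V]
  {E : Submodule ℝ (V × Dual ℝ V)} {Pi : Dual ℝ V →ₗ[ℝ] V}

local notation "pr" => LinearMap.snd ℝ V (Dual ℝ V)

theorem mem_iff_of_forall_mk_mem (hgraph : ∀ α ∈ E.map pr, (Pi α, α) ∈ E)
    (p : V × Dual ℝ V) :
    p ∈ E ↔ p.2 ∈ E.map pr ∧ p.1 - Pi p.2 ∈ ((gOrth E).map pr).dualCoannihilator := by
  rw [← mk_zero_mem_gOrth_iff, gOrth_gOrth]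
  have hsplit : (p.1 - Pi p.2, 0) = p - (Pi p.2, p.2) := Prod.ext rfl (sub_self p.2).symm
  constructor
  · intro hp
    have hα : p.2 ∈ E.map pr := Submodule.mem_map_of_mem hp
    exact ⟨hα, hsplit ▸ E.sub_mem hp (hgraph _ hα)⟩
  · rintro ⟨hα, hZ⟩
    simpa using E.add_mem (hgraph _ hα) hZ

theorem mem_gOrth_iff_of_forall_mk_mem (hskew : ∀ α β : Dual ℝ V, β (Pi α) = -α (Pi β))
    (hgraph : ∀ α ∈ E.map pr, (Pi α, α) ∈ E) (q : V × Dual ℝ V) :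
    q ∈ gOrth E ↔ q.2 ∈ (gOrth E).map pr ∧ q.1 - Pi q.2 ∈ (E.map pr).dualCoannihilator := by
  rw [Submodule.mem_dualCoannihilator]
  constructor
  · intro hq
    refine ⟨Submodule.mem_map_of_mem hq, fun φ hφ => ?_⟩
    have := mem_gOrth_iff.mp hq _ (hgraph φ hφ)
    simp only [map_sub]
    linarith [hskew φ q.2]
  · rintro ⟨hβ, hW⟩
    refine mem_gOrth_iff.mpr fun p hp => ?_
    obtain ⟨hα, hZ⟩ := (mem_iff_of_forall_mk_mem hgraph p).mp hp
    have h1 := hW _ hα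
    have h2 := (Submodule.mem_dualCoannihilator _).mp hZ _ hβ
    simp only [map_sub] at h1 h2
    linarith [hskew p.2 q.2]

end Graph

/-- For an isotropic `E`, with `Σ = pr_{V*}E`, `Σ′ = pr_{V*}E^⊥`, `S = ann_V Σ`,
`S′ = ann_V Σ′`, there is a skew map `Π : V* → V` with
`E = {(Πα + Z, α) : α ∈ Σ, Z ∈ S′}` and `E^⊥ = {(Πβ + W, β) : β ∈ Σ′, W ∈ S}`. -/
theorem stmt9 (V : Type*) [AddCommGroup V] [Module ℝ V] [FiniteDimensional ℝ V]
    (E : Submodule ℝ (V × Dual ℝ V))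
    (hiso : ∀ p ∈ E, ∀ q ∈ E, bigG V p q = 0)
    (Sgm Sgm' : Submodule ℝ (Dual ℝ V)) (S S' : Submodule ℝ V)
    (hSgm : Sgm = Submodule.map (LinearMap.snd ℝ V (Dual ℝ V)) E)
    (hSgm' : Sgm' = Submodule.map (LinearMap.snd ℝ V (Dual ℝ V)) (gOrth E))
    (hS : S = Sgm.dualCoannihilator) (hS' : S' = Sgm'.dualCoannihilator) :
    ∃ Pi : Dual ℝ V →ₗ[ℝ] V,
      (∀ α β : Dual ℝ V, β (Pi α) = -α (Pi β)) ∧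
      (E : Set (V × Dual ℝ V)) =
        {p : V × Dual ℝ V | ∃ α ∈ Sgm, ∃ Z ∈ S', p = (Pi α + Z, α)} ∧
      (gOrth E : Set (V × Dual ℝ V)) =
        {p : V × Dual ℝ V | ∃ β ∈ Sgm', ∃ W ∈ S, p = (Pi β + W, β)} := by
  subst hSgm hSgm' hS hS'
  obtain ⟨σ, hσ⟩ := E.exists_linearMap_mk_mem
  have hσskew (a b : E.map (LinearMap.snd ℝ V (Dual ℝ V))) :
      (b : Dual ℝ V) (σ a) = -(a : Dual ℝ V) (σ b) := by
    have := hiso _ (hσ a) _ (hσ b)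
    simp only [bigG_apply] at this
    linarith
  obtain ⟨Pi, hskew, hext⟩ := exists_skew_extension σ hσskew
  have hgraph (α) (hα : α ∈ E.map (LinearMap.snd ℝ V (Dual ℝ V))) : (Pi α, α) ∈ E :=
    hext ⟨α, hα⟩ ▸ hσ ⟨α, hα⟩
  refine ⟨Pi, hskew, ?_, ?_⟩
  · exact (Set.ext (mem_iff_of_forall_mk_mem hgraph)).trans (setOf_exists_mk_add_eq Pi _ _).symm
  · exact (Set.ext (mem_gOrth_iff_of_forall_mk_mem hskew hgraph)).trans
      (setOf_exists_mk_add_eq Pi _ _).symm
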